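/- arXiv:2304.04857 — 2 statements merged into one kernel-verified Lean document; each statement's English description precedes it below -/
import Mathlib

section
/- Work in dimension 4 with Minkowski metric η = diag(1,−1,−1,−1). Let f be structure constants, γ, ρ : ℝ⁴ → Mat_4(ℝ) smooth, A : ℝ⁴ → ℝ⁴ smooth, and let F : ℝ⁴ → Mat_4(ℝ) be smooth with F_{ab}(x) = −F_{ba}(x) for all x. Assume: (i) the deformed Bianchi identity (D_a F_{bc})(x) − Σ_{d,e} F_{ad}(x) f^{de}_b F_{ec}(x) + cyclic permutations of (a,b,c) = 0 for all x and a,b,c; (ii) for every smooth ψ : ℝ⁴ → ℝ and all a,b,x: (D_a D_b ψ)(x) − (D_b D_a ψ)(x) = {F_{ab}, ψ}(x) + Σ_{d,e} F_{ad}(x) f^{de}_b (D_e ψ)(x) − Σ_{d,e} F_{bd}(x) f^{de}_a (D_e ψ)(x). Then, with E_C^a(x) := Σ_c (D_c F^{ca})(x) + (1/2) Σ_{d,e,b} F_{de}(x) f^{de}_b F^{ab}(x) − Σ_{d,e,b} F_{de}(x) f^{ae}_b F^{db}(x), one has for every x: Σ_a (D_a E_C^a)(x) = (1/2) Σ_{c,a,b}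 f^{ab}_c F_{ab}(x) E_C^c(x). (Proposition 4: the Noether identity for the covariant equations of motion holds for all noncommutativity of Lie-algebra type.) -/
set_option autoImplicit false
set_option maxHeartbeats 1000000

open scoped BigOperators

/-- Partial derivative `∂_a u (x)` of `u : ℝ⁴ → ℝ`. -/
noncomputable def pd (a : Fin 4) (u : (Fin 4 → ℝ) → ℝ) (x : Fin 4 → ℝ) : ℝ :=
  fderiv ℝ u x (Pi.single a 1)

/-- Lie-Poisson bracket `{u,v}(x) = Σ_{a,b,c} f^{ab}_c x^c ∂_a u ∂_b v`. -/
noncomputable def pb (f : Fin 4 → Fin 4 → Fin 4 → ℝ)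
    (u v : (Fin 4 → ℝ) → ℝ) (x : Fin 4 → ℝ) : ℝ :=
  ∑ a, ∑ b, ∑ c, f a b c * x c * pd a u x * pd b v x

/-- Covariant derivative `(D_a ψ)(x) = Σ_m ρ^m_a(A(x)) (Σ_l γ^l_m(A(x)) ∂_l ψ(x) + {A_m, ψ}(x))`. -/
noncomputable def Dcov (f : Fin 4 → Fin 4 → Fin 4 → ℝ)
    (γ ρ : (Fin 4 → ℝ) → Matrix (Fin 4) (Fin 4) ℝ)
    (A : (Fin 4 → ℝ) → Fin 4 → ℝ) (a : Fin 4)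
    (ψ : (Fin 4 → ℝ) → ℝ) (x : Fin 4 → ℝ) : ℝ :=
  ∑ m, ρ (A x) m a * ((∑ l, γ (A x) l m * pd l ψ x) + pb f (fun y => A y m) ψ x)

/-- The Minkowski metric `η = diag(1,−1,−1,−1)`. -/
noncomputable def ηm : Matrix (Fin 4) (Fin 4) ℝ := Matrix.diagonal ![1, -1, -1, -1]

/-- Indices raised with `η`: `F^{ab}(x) = Σ_{c,e} η^{ac} η^{be} F_{ce}(x)`. -/
noncomputable def Fup (F : (Fin 4 → ℝ) → Matrix (Fin 4) (Fin 4) ℝ)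
    (a b : Fin 4) (x : Fin 4 → ℝ) : ℝ :=
  ∑ c, ∑ e, ηm a c * ηm b e * F x c e

/-- The covariant equations-of-motion expression `E_C^a(x)`. -/
noncomputable def EC (f : Fin 4 → Fin 4 → Fin 4 → ℝ)
    (γ ρ : (Fin 4 → ℝ) → Matrix (Fin 4) (Fin 4) ℝ)
    (A : (Fin 4 → ℝ) → Fin 4 → ℝ)
    (F : (Fin 4 → ℝ) → Matrix (Fin 4) (Fin 4) ℝ)
    (a : Fin 4) (x : Fin 4 → ℝ) : ℝ :=
  (∑ c, Dcov f γ ρ A c (fun y => Fup F c a y) x)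
  + (1/2) * (∑ d, ∑ e, ∑ b, F x d e * f d e b * Fup F a b x)
  - ∑ d, ∑ e, ∑ b, F x d e * f a e b * Fup F d b x

/-- Structure constants: antisymmetry and Jacobi identity. -/
def IsStructureConstants (f : Fin 4 → Fin 4 → Fin 4 → ℝ) : Prop :=
  (∀ a b c, f a b c = - f b a c) ∧
  (∀ i j k a, ∑ l, (f k l i * f j a l + f j l i * f a k l + f a l i * f k j l) = 0)

section Infra

variable {f : Fin 4 → Fin 4 → Fin 4 → ℝ}
variable {γ ρ : (Fin 4 → ℝ) → Matrix (Fin 4) (Fin 4) ℝ}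
variable {A : (Fin 4 → ℝ) → Fin 4 → ℝ}
variable {u v w : (Fin 4 → ℝ) → ℝ} {x : Fin 4 → ℝ} {a : Fin 4} {c : ℝ}

lemma pd_neg : pd a (fun y => -u y) x = - pd a u x := by
  simp [pd, fderiv_neg]

lemma pd_add (hu : DifferentiableAt ℝ u x) (hv : DifferentiableAt ℝ v x) :
    pd a (fun y => u y + v y) x = pd a u x + pd a v x := by
  simp [pd, fderiv_fun_add hu hv]

lemma pd_const_mul (hu : DifferentiableAt ℝ u x) :
    pd a (fun y => c * u y) x = c * pd a u x := by
  simp [pd, fderiv_const_mul hu c]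

lemma pd_mul (hu : DifferentiableAt ℝ u x) (hv : DifferentiableAt ℝ v x) :
    pd a (fun y => u y * v y) x = u x * pd a v x + v x * pd a u x := by
  simp [pd, fderiv_fun_mul hu hv]

lemma pd_sum {ι : Type*} {s : Finset ι} {g : ι → (Fin 4 → ℝ) → ℝ}
    (h : ∀ i ∈ s, DifferentiableAt ℝ (g i) x) :
    pd a (fun y => ∑ i ∈ s, g i y) x = ∑ i ∈ s, pd a (g i) x := by
  classical
  induction s using Finset.induction_on with
  | empty => simp [pd]
  | @insert j s hj ih =>
      simp only [Finset.sum_insert hj]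
      have h1 : DifferentiableAt ℝ (g j) x := h j (Finset.mem_insert_self _ _)
      have h2 : DifferentiableAt ℝ (fun y => ∑ i ∈ s, g i y) x :=
        DifferentiableAt.fun_sum fun i hi => h i (Finset.mem_insert_of_mem hi)
      rw [pd_add h1 h2, ih fun i hi => h i (Finset.mem_insert_of_mem hi)]

lemma pb_neg₂ : pb f u (fun y => -v y) x = - pb f u v x := by
  simp only [pb, pd_neg]
  simp [mul_neg]

lemma pb_add₂ (hv : DifferentiableAt ℝ v x) (hw : DifferentiableAt ℝ w x) :
    pb f u (fun y => v y + w y) x = pb f u v x + pb f u w x := by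
  simp only [pb, pd_add hv hw]
  simp [Finset.sum_add_distrib, mul_add]

lemma pb_const_mul₂ (hv : DifferentiableAt ℝ v x) :
    pb f u (fun y => c * v y) x = c * pb f u v x := by
  simp only [pb, pd_const_mul hv]
  simp only [Finset.mul_sum]
  refine Finset.sum_congr rfl fun a _ => Finset.sum_congr rfl fun b _ => Finset.sum_congr rfl fun e _ => by ring

lemma pb_mul₂ (hv : DifferentiableAt ℝ v x) (hw : DifferentiableAt ℝ w x) :
    pb f u (fun y => v y * w y) x = v x * pb f u w x + w x * pb f u v x := by
  simp only [pb, pd_mul hv hw]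
  simp only [Finset.mul_sum, ← Finset.sum_add_distrib]
  refine Finset.sum_congr rfl fun a _ => Finset.sum_congr rfl fun b _ => Finset.sum_congr rfl fun e _ => by ring

lemma pb_sum₂ {ι : Type*} {s : Finset ι} {g : ι → (Fin 4 → ℝ) → ℝ}
    (h : ∀ i ∈ s, DifferentiableAt ℝ (g i) x) :
    pb f u (fun y => ∑ i ∈ s, g i y) x = ∑ i ∈ s, pb f u (g i) x := by
  classical
  induction s using Finset.induction_on with
  | empty =>
      simp only [Finset.sum_empty]
      have h0 : pb f u (fun _ : Fin 4 → ℝ => (0:ℝ)) x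
          = pb f u (fun y => (0:ℝ) * (fun _ : Fin 4 → ℝ => (0:ℝ)) y) x := by
        norm_num
      rw [h0, pb_const_mul₂ (by simp : DifferentiableAt ℝ (fun _ : Fin 4 → ℝ => (0:ℝ)) x)]
      simp
  | @insert j s hj ih =>
      simp only [Finset.sum_insert hj]
      have h1 : DifferentiableAt ℝ (g j) x := h j (Finset.mem_insert_self _ _)
      have h2 : DifferentiableAt ℝ (fun y => ∑ i ∈ s, g i y) x :=
        DifferentiableAt.fun_sum fun i hi => h i (Finset.mem_insert_of_mem hi)
      rw [pb_add₂ h1 h2, ih fun i hi => h i (Finset.mem_insert_of_mem hi)]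

lemma pb_self (hf1 : ∀ a b c, f a b c = - f b a c) : pb f u u x = 0 := by
  have h : pb f u u x = - pb f u u x := by
    conv_lhs => rw [pb]
    calc (∑ a, ∑ b, ∑ e, f a b e * x e * pd a u x * pd b u x)
        = ∑ a, ∑ b, ∑ e, -(f b a e * x e * pd b u x * pd a u x) := by
          refine Finset.sum_congr rfl fun a _ => Finset.sum_congr rfl fun b _ =>
            Finset.sum_congr rfl fun e _ => by rw [hf1 a b e]; ring
      _ = -∑ a, ∑ b, ∑ e, f b a e * x e * pd b u x * pd a u x := by
          simp [Finset.sum_neg_distrib]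
      _ = - pb f u u x := by rw [pb]; exact neg_inj.mpr Finset.sum_comm
  linarith

lemma Dcov_neg : Dcov f γ ρ A a (fun y => -u y) x = - Dcov f γ ρ A a u x := by
  simp only [Dcov, pd_neg, pb_neg₂]
  rw [← Finset.sum_neg_distrib]
  refine Finset.sum_congr rfl fun m _ => ?_
  rw [show (∑ l, γ (A x) l m * -pd l u x) = -∑ l, γ (A x) l m * pd l u x by
    rw [← Finset.sum_neg_distrib]; exact Finset.sum_congr rfl fun l _ => by ring]
  ring

lemma Dcov_add (hu : DifferentiableAt ℝ u x) (hv : DifferentiableAt ℝ v x) :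
    Dcov f γ ρ A a (fun y => u y + v y) x = Dcov f γ ρ A a u x + Dcov f γ ρ A a v x := by
  simp only [Dcov, pd_add hu hv, pb_add₂ hu hv]
  rw [← Finset.sum_add_distrib]
  refine Finset.sum_congr rfl fun m _ => ?_
  rw [show (∑ l, γ (A x) l m * (pd l u x + pd l v x))
      = (∑ l, γ (A x) l m * pd l u x) + ∑ l, γ (A x) l m * pd l v x by
    rw [← Finset.sum_add_distrib]; exact Finset.sum_congr rfl fun l _ => by ring]
  ring

lemma Dcov_const_mul (hu : DifferentiableAt ℝ u x) :
    Dcov f γ ρ A a (fun y => c * u y) x = c * Dcov f γ ρ A a u x := by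
  simp only [Dcov, pd_const_mul hu, pb_const_mul₂ hu]
  rw [Finset.mul_sum]
  refine Finset.sum_congr rfl fun m _ => ?_
  rw [show (∑ l, γ (A x) l m * (c * pd l u x)) = c * ∑ l, γ (A x) l m * pd l u x by
    rw [Finset.mul_sum]; exact Finset.sum_congr rfl fun l _ => by ring]
  ring

lemma Dcov_mul (hu : DifferentiableAt ℝ u x) (hv : DifferentiableAt ℝ v x) :
    Dcov f γ ρ A a (fun y => u y * v y) x
      = u x * Dcov f γ ρ A a v x + v x * Dcov f γ ρ A a u x := by
  simp only [Dcov, pd_mul hu hv, pb_mul₂ hu hv]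
  rw [Finset.mul_sum, Finset.mul_sum, ← Finset.sum_add_distrib]
  refine Finset.sum_congr rfl fun m _ => ?_
  rw [show (∑ l, γ (A x) l m * (u x * pd l v x + v x * pd l u x))
      = u x * (∑ l, γ (A x) l m * pd l v x) + v x * ∑ l, γ (A x) l m * pd l u x by
    rw [Finset.mul_sum, Finset.mul_sum, ← Finset.sum_add_distrib]
    exact Finset.sum_congr rfl fun l _ => by ring]
  ring

lemma Dcov_sub (hu : DifferentiableAt ℝ u x) (hv : DifferentiableAt ℝ v x) :
    Dcov f γ ρ A a (fun y => u y - v y) x = Dcov f γ ρ A a u x - Dcov f γ ρ A a v x := by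
  have h := Dcov_add (f := f) (γ := γ) (ρ := ρ) (A := A) (a := a) (u := u)
    (v := fun y => -v y) hu hv.neg
  rw [Dcov_neg] at h
  have h2 : (fun y => u y - v y) = fun y => u y + -v y := funext fun y => by ring
  rw [h2, h]
  ring

lemma Dcov_sum {ι : Type*} {s : Finset ι} {g : ι → (Fin 4 → ℝ) → ℝ}
    (h : ∀ i ∈ s, DifferentiableAt ℝ (g i) x) :
    Dcov f γ ρ A a (fun y => ∑ i ∈ s, g i y) x = ∑ i ∈ s, Dcov f γ ρ A a (g i) x := by
  classical
  induction s using Finset.induction_on with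
  | empty =>
      simp only [Finset.sum_empty]
      have h0 : Dcov f γ ρ A a (fun _ : Fin 4 → ℝ => (0:ℝ)) x
          = Dcov f γ ρ A a (fun y => (0:ℝ) * (fun _ : Fin 4 → ℝ => (0:ℝ)) y) x := by
        norm_num
      rw [h0, Dcov_const_mul (by simp : DifferentiableAt ℝ (fun _ : Fin 4 → ℝ => (0:ℝ)) x)]
      simp
  | @insert j s hj ih =>
      simp only [Finset.sum_insert hj]
      have h1 : DifferentiableAt ℝ (g j) x := h j (Finset.mem_insert_self _ _)
      have h2 : DifferentiableAt ℝ (fun y => ∑ i ∈ s, g i y) x :=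
        DifferentiableAt.fun_sum fun i hi => h i (Finset.mem_insert_of_mem hi)
      rw [Dcov_add h1 h2, ih fun i hi => h i (Finset.mem_insert_of_mem hi)]


lemma contDiff_pd {ψ : (Fin 4 → ℝ) → ℝ} (hψ : ContDiff ℝ (⊤ : ℕ∞) ψ) (l : Fin 4) :
    ContDiff ℝ (⊤ : ℕ∞) (fun y => pd l ψ y) := by
  have h1 : ContDiff ℝ (⊤ : ℕ∞) (fderiv ℝ ψ) := hψ.fderiv_right (by simp)
  exact h1.clm_apply contDiff_const

lemma contDiff_pb {u v : (Fin 4 → ℝ) → ℝ} (hu : ContDiff ℝ (⊤ : ℕ∞) u) (hv : ContDiff ℝ (⊤ : ℕ∞) v) :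
    ContDiff ℝ (⊤ : ℕ∞) (fun y => pb f u v y) := by
  refine ContDiff.sum fun a _ => ContDiff.sum fun b _ => ContDiff.sum fun e _ => ?_
  have hxc : ContDiff ℝ (⊤ : ℕ∞) (fun y : Fin 4 → ℝ => y e) :=
    (ContinuousLinearMap.proj e : (Fin 4 → ℝ) →L[ℝ] ℝ).contDiff
  exact ((contDiff_const.mul hxc).mul (contDiff_pd hu a)).mul (contDiff_pd hv b)

lemma contDiff_Dcov (hγ : ∀ i j, ContDiff ℝ (⊤ : ℕ∞) (fun B => γ B i j))
    (hρ : ∀ i j, ContDiff ℝ (⊤ : ℕ∞) (fun B => ρ B i j))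
    (hA : ContDiff ℝ (⊤ : ℕ∞) A) {ψ : (Fin 4 → ℝ) → ℝ} (hψ : ContDiff ℝ (⊤ : ℕ∞) ψ) (a : Fin 4) :
    ContDiff ℝ (⊤ : ℕ∞) (fun y => Dcov f γ ρ A a ψ y) := by
  refine ContDiff.sum fun m _ => ContDiff.mul ((hρ m a).comp hA) (ContDiff.add ?_ ?_)
  · exact ContDiff.sum fun l _ => ((hγ l m).comp hA).mul (contDiff_pd hψ l)
  · exact contDiff_pb (contDiff_pi.mp hA m) hψ


end Infra

section SumHelpers

variable {M : Type*} [AddCommMonoid M]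

lemma s2_12 (g : Fin 4 → Fin 4 → M) :
    (∑ a, ∑ b, g a b) = ∑ a, ∑ b, g b a := Finset.sum_comm

lemma s3_12 (g : Fin 4 → Fin 4 → Fin 4 → M) :
    (∑ a, ∑ b, ∑ c, g a b c) = ∑ a, ∑ b, ∑ c, g b a c := Finset.sum_comm

lemma s3_23 (g : Fin 4 → Fin 4 → Fin 4 → M) :
    (∑ a, ∑ b, ∑ c, g a b c) = ∑ a, ∑ b, ∑ c, g a c b :=
  Finset.sum_congr rfl fun _ _ => Finset.sum_comm

lemma s4_12 (g : Fin 4 → Fin 4 → Fin 4 → Fin 4 → M) :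
    (∑ a, ∑ b, ∑ c, ∑ d, g a b c d) = ∑ a, ∑ b, ∑ c, ∑ d, g b a c d := Finset.sum_comm

lemma s4_23 (g : Fin 4 → Fin 4 → Fin 4 → Fin 4 → M) :
    (∑ a, ∑ b, ∑ c, ∑ d, g a b c d) = ∑ a, ∑ b, ∑ c, ∑ d, g a c b d :=
  Finset.sum_congr rfl fun _ _ => Finset.sum_comm

lemma s4_34 (g : Fin 4 → Fin 4 → Fin 4 → Fin 4 → M) :
    (∑ a, ∑ b, ∑ c, ∑ d, g a b c d) = ∑ a, ∑ b, ∑ c, ∑ d, g a b d c :=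
  Finset.sum_congr rfl fun _ _ => Finset.sum_congr rfl fun _ _ => Finset.sum_comm

lemma s5_12 (g : Fin 4 → Fin 4 → Fin 4 → Fin 4 → Fin 4 → M) :
    (∑ a, ∑ b, ∑ c, ∑ d, ∑ e, g a b c d e) = ∑ a, ∑ b, ∑ c, ∑ d, ∑ e, g b a c d e :=
  Finset.sum_comm

lemma s5_23 (g : Fin 4 → Fin 4 → Fin 4 → Fin 4 → Fin 4 → M) :
    (∑ a, ∑ b, ∑ c, ∑ d, ∑ e, g a b c d e) = ∑ a, ∑ b, ∑ c, ∑ d, ∑ e, g a c b d e :=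
  Finset.sum_congr rfl fun _ _ => Finset.sum_comm

lemma s5_34 (g : Fin 4 → Fin 4 → Fin 4 → Fin 4 → Fin 4 → M) :
    (∑ a, ∑ b, ∑ c, ∑ d, ∑ e, g a b c d e) = ∑ a, ∑ b, ∑ c, ∑ d, ∑ e, g a b d c e :=
  Finset.sum_congr rfl fun _ _ => Finset.sum_congr rfl fun _ _ => Finset.sum_comm

lemma s5_45 (g : Fin 4 → Fin 4 → Fin 4 → Fin 4 → Fin 4 → M) :
    (∑ a, ∑ b, ∑ c, ∑ d, ∑ e, g a b c d e) = ∑ a, ∑ b, ∑ c, ∑ d, ∑ e, g a b c e d :=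
  Finset.sum_congr rfl fun _ _ => Finset.sum_congr rfl fun _ _ =>
    Finset.sum_congr rfl fun _ _ => Finset.sum_comm

lemma s6_12 (g : Fin 4 → Fin 4 → Fin 4 → Fin 4 → Fin 4 → Fin 4 → M) :
    (∑ a, ∑ b, ∑ c, ∑ d, ∑ e, ∑ k, g a b c d e k)
      = ∑ a, ∑ b, ∑ c, ∑ d, ∑ e, ∑ k, g b a c d e k := Finset.sum_comm

lemma s6_23 (g : Fin 4 → Fin 4 → Fin 4 → Fin 4 → Fin 4 → Fin 4 → M) :
    (∑ a, ∑ b, ∑ c, ∑ d, ∑ e, ∑ k, g a b c d e k)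
      = ∑ a, ∑ b, ∑ c, ∑ d, ∑ e, ∑ k, g a c b d e k :=
  Finset.sum_congr rfl fun _ _ => Finset.sum_comm

lemma s6_34 (g : Fin 4 → Fin 4 → Fin 4 → Fin 4 → Fin 4 → Fin 4 → M) :
    (∑ a, ∑ b, ∑ c, ∑ d, ∑ e, ∑ k, g a b c d e k)
      = ∑ a, ∑ b, ∑ c, ∑ d, ∑ e, ∑ k, g a b d c e k :=
  Finset.sum_congr rfl fun _ _ => Finset.sum_congr rfl fun _ _ => Finset.sum_comm

lemma s6_45 (g : Fin 4 → Fin 4 → Fin 4 → Fin 4 → Fin 4 → Fin 4 → M) :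
    (∑ a, ∑ b, ∑ c, ∑ d, ∑ e, ∑ k, g a b c d e k)
      = ∑ a, ∑ b, ∑ c, ∑ d, ∑ e, ∑ k, g a b c e d k :=
  Finset.sum_congr rfl fun _ _ => Finset.sum_congr rfl fun _ _ =>
    Finset.sum_congr rfl fun _ _ => Finset.sum_comm

lemma s6_56 (g : Fin 4 → Fin 4 → Fin 4 → Fin 4 → Fin 4 → Fin 4 → M) :
    (∑ a, ∑ b, ∑ c, ∑ d, ∑ e, ∑ k, g a b c d e k)
      = ∑ a, ∑ b, ∑ c, ∑ d, ∑ e, ∑ k, g a b c d k e :=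
  Finset.sum_congr rfl fun _ _ => Finset.sum_congr rfl fun _ _ =>
    Finset.sum_congr rfl fun _ _ => Finset.sum_congr rfl fun _ _ => Finset.sum_comm

lemma sum2_antisym {g : Fin 4 → Fin 4 → ℝ} (h : ∀ a b, g a b = - g b a) :
    (∑ a, ∑ b, g a b) = 0 := by
  have h1 : (∑ a, ∑ b, g a b) = - ∑ a, ∑ b, g a b := by
    calc (∑ a, ∑ b, g a b) = ∑ a, ∑ b, -g b a :=
          Finset.sum_congr rfl fun a _ => Finset.sum_congr rfl fun b _ => h a b
      _ = -∑ a, ∑ b, g b a := by simp [Finset.sum_neg_distrib]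
      _ = -∑ a, ∑ b, g a b := by rw [s2_12 (fun a b => g b a)]
  linarith

lemma sum3_antisym23 {g : Fin 4 → Fin 4 → Fin 4 → ℝ} (h : ∀ a b c, g a b c = - g a c b) :
    (∑ a, ∑ b, ∑ c, g a b c) = 0 := by
  have h1 : (∑ a, ∑ b, ∑ c, g a b c) = - ∑ a, ∑ b, ∑ c, g a b c := by
    calc (∑ a, ∑ b, ∑ c, g a b c) = ∑ a, ∑ b, ∑ c, -g a c b :=
          Finset.sum_congr rfl fun a _ => Finset.sum_congr rfl fun b _ =>
            Finset.sum_congr rfl fun c _ => h a b c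
      _ = -∑ a, ∑ b, ∑ c, g a c b := by simp [Finset.sum_neg_distrib]
      _ = -∑ a, ∑ b, ∑ c, g a b c := by rw [s3_23 (fun a b c => g a c b)]
  linarith

end SumHelpers

section Eta

lemma etam_diag (a : Fin 4) : ηm a a = ![1,-1,-1,-1] a := Matrix.diagonal_apply_eq _ a

lemma etam_ne {a b : Fin 4} (h : a ≠ b) : ηm a b = 0 := Matrix.diagonal_apply_ne _ h

lemma Fup_eq (F : (Fin 4 → ℝ) → Matrix (Fin 4) (Fin 4) ℝ) (a b : Fin 4) (x : Fin 4 → ℝ) :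
    Fup F a b x = ηm a a * ηm b b * F x a b := by
  rw [Fup]
  rw [Finset.sum_eq_single a (fun c _ hc => by
    rw [show (∑ e, ηm a c * ηm b e * F x c e) = ∑ e : Fin 4, (0:ℝ) from
      Finset.sum_congr rfl fun e _ => by rw [etam_ne (Ne.symm hc)]; ring]
    simp) (fun h => absurd (Finset.mem_univ a) h)]
  rw [Finset.sum_eq_single b (fun e _ he => by rw [etam_ne (Ne.symm he)]; ring)
    (fun h => absurd (Finset.mem_univ b) h)]

end Eta



section Flat

abbrev I4 := Fin 4

lemma sum_relabel {ι : Type*} [Fintype ι] {g h : ι → ℝ} (σ : Equiv.Perm ι)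
    (He : ∀ i, g i = h (σ i)) : (∑ i, g i) = ∑ i, h i := by
  rw [Finset.sum_congr rfl fun i _ => He i]
  exact Equiv.sum_comp σ h

lemma sum_invol {ι : Type*} [Fintype ι] {g : ι → ℝ} (σ : Equiv.Perm ι)
    (h : ∀ i, g (σ i) = - g i) : (∑ i, g i) = 0 := by
  have h1 : (∑ i, g i) = ∑ i, g (σ i) := (Equiv.sum_comp σ g).symm
  have h2 : (∑ i, g (σ i)) = -∑ i, g i := by
    rw [Finset.sum_congr rfl fun i _ => h i]
    simp
  linarith

lemma sum4_flat (g : I4 → I4 → I4 → I4 → ℝ) :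
    (∑ i : I4 × I4 × I4 × I4, g i.1 i.2.1 i.2.2.1 i.2.2.2)
      = ∑ a, ∑ b, ∑ c, ∑ d, g a b c d := by
  simp [Fintype.sum_prod_type]

lemma sum6_flat (g : I4 → I4 → I4 → I4 → I4 → I4 → ℝ) :
    (∑ i : I4 × I4 × I4 × I4 × I4 × I4, g i.1 i.2.1 i.2.2.1 i.2.2.2.1 i.2.2.2.2.1 i.2.2.2.2.2)
      = ∑ a, ∑ b, ∑ c, ∑ d, ∑ e, ∑ k, g a b c d e k := by
  simp [Fintype.sum_prod_type]

lemma relabel4 {g h : I4 → I4 → I4 → I4 → ℝ} (σ : Equiv.Perm (I4 × I4 × I4 × I4))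
    (H : ∀ i : I4 × I4 × I4 × I4,
      g i.1 i.2.1 i.2.2.1 i.2.2.2 = h (σ i).1 (σ i).2.1 (σ i).2.2.1 (σ i).2.2.2) :
    (∑ a, ∑ b, ∑ c, ∑ d, g a b c d) = ∑ a, ∑ b, ∑ c, ∑ d, h a b c d := by
  rw [← sum4_flat g, ← sum4_flat h]
  exact sum_relabel σ H

lemma vanish4 {g : I4 → I4 → I4 → I4 → ℝ} (σ : Equiv.Perm (I4 × I4 × I4 × I4))
    (H : ∀ i : I4 × I4 × I4 × I4,
      g (σ i).1 (σ i).2.1 (σ i).2.2.1 (σ i).2.2.2 = - g i.1 i.2.1 i.2.2.1 i.2.2.2) :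
    (∑ a, ∑ b, ∑ c, ∑ d, g a b c d) = 0 := by
  rw [← sum4_flat g]
  exact sum_invol σ H

lemma relabel6 {g h : I4 → I4 → I4 → I4 → I4 → I4 → ℝ}
    (σ : Equiv.Perm (I4 × I4 × I4 × I4 × I4 × I4))
    (H : ∀ i : I4 × I4 × I4 × I4 × I4 × I4,
      g i.1 i.2.1 i.2.2.1 i.2.2.2.1 i.2.2.2.2.1 i.2.2.2.2.2
        = h (σ i).1 (σ i).2.1 (σ i).2.2.1 (σ i).2.2.2.1 (σ i).2.2.2.2.1 (σ i).2.2.2.2.2) :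
    (∑ a, ∑ b, ∑ c, ∑ d, ∑ e, ∑ k, g a b c d e k)
      = ∑ a, ∑ b, ∑ c, ∑ d, ∑ e, ∑ k, h a b c d e k := by
  rw [← sum6_flat g, ← sum6_flat h]
  exact sum_relabel σ H

lemma vanish6 {g : I4 → I4 → I4 → I4 → I4 → I4 → ℝ}
    (σ : Equiv.Perm (I4 × I4 × I4 × I4 × I4 × I4))
    (H : ∀ i : I4 × I4 × I4 × I4 × I4 × I4,
      g (σ i).1 (σ i).2.1 (σ i).2.2.1 (σ i).2.2.2.1 (σ i).2.2.2.2.1 (σ i).2.2.2.2.2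
        = - g i.1 i.2.1 i.2.2.1 i.2.2.2.1 i.2.2.2.2.1 i.2.2.2.2.2) :
    (∑ a, ∑ b, ∑ c, ∑ d, ∑ e, ∑ k, g a b c d e k) = 0 := by
  rw [← sum6_flat g]
  exact sum_invol σ H

lemma sum4_congr {g h : I4 → I4 → I4 → I4 → ℝ} (H : ∀ a b c d, g a b c d = h a b c d) :
    (∑ a, ∑ b, ∑ c, ∑ d, g a b c d) = ∑ a, ∑ b, ∑ c, ∑ d, h a b c d :=
  Finset.sum_congr rfl fun a _ => Finset.sum_congr rfl fun b _ =>
    Finset.sum_congr rfl fun c _ => Finset.sum_congr rfl fun d _ => H a b c d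

lemma sum5_congr {g h : I4 → I4 → I4 → I4 → I4 → ℝ} (H : ∀ a b c d e, g a b c d e = h a b c d e) :
    (∑ a, ∑ b, ∑ c, ∑ d, ∑ e, g a b c d e) = ∑ a, ∑ b, ∑ c, ∑ d, ∑ e, h a b c d e :=
  Finset.sum_congr rfl fun a _ => Finset.sum_congr rfl fun b _ =>
    Finset.sum_congr rfl fun c _ => Finset.sum_congr rfl fun d _ =>
      Finset.sum_congr rfl fun e _ => H a b c d e

lemma sum3_congr {g h : I4 → I4 → I4 → ℝ} (H : ∀ a b c, g a b c = h a b c) :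
    (∑ a, ∑ b, ∑ c, g a b c) = ∑ a, ∑ b, ∑ c, h a b c :=
  Finset.sum_congr rfl fun a _ => Finset.sum_congr rfl fun b _ =>
    Finset.sum_congr rfl fun c _ => H a b c

lemma sum4_sub (g h : I4 → I4 → I4 → I4 → ℝ) :
    ((∑ a, ∑ b, ∑ c, ∑ d, g a b c d) - ∑ a, ∑ b, ∑ c, ∑ d, h a b c d)
      = ∑ a, ∑ b, ∑ c, ∑ d, (g a b c d - h a b c d) := by
  simp [Finset.sum_sub_distrib]

lemma sum4_add (g h : I4 → I4 → I4 → I4 → ℝ) :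
    ((∑ a, ∑ b, ∑ c, ∑ d, g a b c d) + ∑ a, ∑ b, ∑ c, ∑ d, h a b c d)
      = ∑ a, ∑ b, ∑ c, ∑ d, (g a b c d + h a b c d) := by
  simp [Finset.sum_add_distrib]

end Flat

section Key

lemma key (f : I4 → I4 → I4 → ℝ)
    (hf1 : ∀ a b c, f a b c = - f b a c)
    (hf2 : ∀ i j k a, ∑ l, (f k l i * f j a l + f j l i * f a k l + f a l i * f k j l) = 0)
    (e : I4 → ℝ) (Fm : I4 → I4 → ℝ) (hFm : ∀ a b, Fm a b = - Fm b a)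
    (DF : I4 → I4 → I4 → ℝ) (hDFa : ∀ m b c, DF m b c = - DF m c b)
    (hB : ∀ m c a, DF m c a + DF c a m + DF a m c
      = (∑ s, ∑ t, Fm m s * f s t c * Fm t a)
        + (∑ s, ∑ t, Fm c s * f s t a * Fm t m)
        + (∑ s, ∑ t, Fm a s * f s t m * Fm t c)) :
    (∑ a, ∑ c, ∑ d, ∑ m, e a * e c * Fm a d * f d m c * DF m c a)
    + (1/2) * (∑ a, ∑ d, ∑ q, ∑ b, f d q b * (e a * e b)
        * (Fm d q * DF a a b + Fm a b * DF a d q))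
    - (∑ a, ∑ d, ∑ q, ∑ b, f a q b * (e d * e b)
        * (Fm d q * DF a d b + Fm d b * DF a d q))
    = (1/2) * ∑ c, ∑ a, ∑ b, f a b c * Fm a b *
        ((∑ m, e m * e c * DF m m c)
         + (1/2) * (∑ d, ∑ q, ∑ b', Fm d q * f d q b' * (e c * e b' * Fm c b'))
         - ∑ d, ∑ q, ∑ b', Fm d q * f c q b' * (e d * e b' * Fm d b')) := by
  -- Jacobi in contracted form
  have hJc : ∀ s t a p : I4, (∑ l, f l a p * f s t l)
      = ∑ l, (f s l p * f t a l + f t l p * f a s l) := by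
    intro s t a p
    have h := hf2 p t s a
    have h1 : (∑ l, f l a p * f s t l) = - ∑ l, f a l p * f s t l := by
      rw [← Finset.sum_neg_distrib]
      exact Finset.sum_congr rfl fun l _ => by rw [hf1 l a p]; ring
    rw [Finset.sum_add_distrib, Finset.sum_add_distrib] at h
    rw [Finset.sum_add_distrib, h1]
    linarith
  have hJc2 : ∀ s t a p : I4, (∑ l, f t l p * f a s l)
      = - (∑ l, f s l p * f t a l) - ∑ l, f a l p * f s t l := by
    intro s t a p
    have h := hf2 p t s a
    rw [Finset.sum_add_distrib, Finset.sum_add_distrib] at h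
    linarith
  have hmulsum : ∀ (C : ℝ) (u : I4 → I4 → ℝ),
      C * (∑ s, ∑ t, u s t) = ∑ s, ∑ t, C * u s t := by
    intro C u
    rw [Finset.mul_sum]
    exact Finset.sum_congr rfl fun s _ => Finset.mul_sum _ _ _
  -- split the second LHS block
  have e2 : (∑ a, ∑ d, ∑ q, ∑ b, f d q b * (e a * e b)
        * (Fm d q * DF a a b + Fm a b * DF a d q))
      = (∑ a, ∑ d, ∑ q, ∑ b, f d q b * e a * e b * Fm d q * DF a a b)
        + ∑ a, ∑ d, ∑ q, ∑ b, f d q b * e a * e b * Fm a b * DF a d q := by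
    rw [sum4_add]
    exact sum4_congr fun a d q b => by ring
  -- split the third LHS block
  have e3 : (∑ a, ∑ d, ∑ q, ∑ b, f a q b * (e d * e b)
        * (Fm d q * DF a d b + Fm d b * DF a d q))
      = (∑ a, ∑ d, ∑ q, ∑ b, f a q b * e d * e b * Fm d q * DF a d b)
        + ∑ a, ∑ d, ∑ q, ∑ b, f a q b * e d * e b * Fm d b * DF a d q := by
    rw [sum4_add]
    exact sum4_congr fun a d q b => by ring
  -- expand the RHS
  have eR : (∑ c, ∑ a, ∑ b, f a b c * Fm a b *
        ((∑ m, e m * e c * DF m m c)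
         + (1/2) * (∑ d, ∑ q, ∑ b', Fm d q * f d q b' * (e c * e b' * Fm c b'))
         - ∑ d, ∑ q, ∑ b', Fm d q * f c q b' * (e d * e b' * Fm d b')))
      = (∑ c, ∑ a, ∑ b, ∑ m, f a b c * Fm a b * e m * e c * DF m m c)
        + (1/2) * (∑ c, ∑ a, ∑ b, ∑ d, ∑ q, ∑ m,
            f a b c * Fm a b * Fm d q * f d q m * e c * e m * Fm c m)
        - ∑ c, ∑ a, ∑ b, ∑ d, ∑ q, ∑ m,
            f a b c * Fm a b * Fm d q * f c q m * e d * e m * Fm d m := by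
    have step : ∀ c a b, f a b c * Fm a b *
          ((∑ m, e m * e c * DF m m c)
           + (1/2) * (∑ d, ∑ q, ∑ b', Fm d q * f d q b' * (e c * e b' * Fm c b'))
           - ∑ d, ∑ q, ∑ b', Fm d q * f c q b' * (e d * e b' * Fm d b'))
        = (∑ m, f a b c * Fm a b * e m * e c * DF m m c)
          + (1/2) * (∑ d, ∑ q, ∑ m, f a b c * Fm a b * Fm d q * f d q m * e c * e m * Fm c m)
          - ∑ d, ∑ q, ∑ m, f a b c * Fm a b * Fm d q * f c q m * e d * e m * Fm d m := by
      intro c a b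
      have hu1 : f a b c * Fm a b * (∑ m, e m * e c * DF m m c)
          = ∑ m, f a b c * Fm a b * e m * e c * DF m m c := by
        rw [Finset.mul_sum]; exact Finset.sum_congr rfl fun m _ => by ring
      have hu2 : f a b c * Fm a b * (∑ d, ∑ q, ∑ b', Fm d q * f d q b' * (e c * e b' * Fm c b'))
          = ∑ d, ∑ q, ∑ m, f a b c * Fm a b * Fm d q * f d q m * e c * e m * Fm c m := by
        rw [Finset.mul_sum]
        refine Finset.sum_congr rfl fun d _ => ?_
        rw [Finset.mul_sum]
        refine Finset.sum_congr rfl fun q _ => ?_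
        rw [Finset.mul_sum]
        exact Finset.sum_congr rfl fun m _ => by ring
      have hu3 : f a b c * Fm a b * (∑ d, ∑ q, ∑ b', Fm d q * f c q b' * (e d * e b' * Fm d b'))
          = ∑ d, ∑ q, ∑ m, f a b c * Fm a b * Fm d q * f c q m * e d * e m * Fm d m := by
        rw [Finset.mul_sum]
        refine Finset.sum_congr rfl fun d _ => ?_
        rw [Finset.mul_sum]
        refine Finset.sum_congr rfl fun q _ => ?_
        rw [Finset.mul_sum]
        exact Finset.sum_congr rfl fun m _ => by ring
      rw [mul_sub, mul_add, hu1, hu3, show f a b c * Fm a b *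
          ((1/2) * (∑ d, ∑ q, ∑ b', Fm d q * f d q b' * (e c * e b' * Fm c b')))
        = (1/2) * (f a b c * Fm a b * (∑ d, ∑ q, ∑ b', Fm d q * f d q b' * (e c * e b' * Fm c b'))) from by ring, hu2]
    rw [sum3_congr step]
    simp only [Finset.sum_add_distrib, Finset.sum_sub_distrib, ← Finset.mul_sum]
  -- k1 : T2bn = R1n
  have k1 : (∑ a, ∑ d, ∑ q, ∑ b, f d q b * e a * e b * Fm d q * DF a a b)
      = ∑ c, ∑ a, ∑ b, ∑ m, f a b c * Fm a b * e m * e c * DF m m c := by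
    refine relabel4 ⟨fun i => (i.2.2.2, i.2.1, i.2.2.1, i.1),
      fun i => (i.2.2.2, i.2.1, i.2.2.1, i.1), fun _ => rfl, fun _ => rfl⟩ ?_
    rintro ⟨a, d, q, b⟩
    simp only [Equiv.coe_fn_mk]
    ring
  -- T1n in canonical order (m,c,a,d)
  have k2a : (∑ a, ∑ c, ∑ d, ∑ m, e a * e c * Fm a d * f d m c * DF m c a)
      = ∑ m, ∑ c, ∑ a, ∑ d, e a * e c * Fm a d * f d m c * DF m c a := by
    refine relabel4 ⟨fun i => (i.2.2.2, i.2.1, i.1, i.2.2.1),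
      fun i => (i.2.2.1, i.2.1, i.2.2.2, i.1), fun _ => rfl, fun _ => rfl⟩ ?_
    rintro ⟨a, c, d, m⟩
    simp only [Equiv.coe_fn_mk]
  -- T3bn in canonical order (m,c,a,d)
  have k2b : (∑ a, ∑ d, ∑ q, ∑ b, f a q b * e d * e b * Fm d q * DF a d b)
      = ∑ m, ∑ c, ∑ a, ∑ d, f m d a * e c * e a * Fm c d * DF m c a := by
    refine relabel4 ⟨fun i => (i.1, i.2.1, i.2.2.2, i.2.2.1),
      fun i => (i.1, i.2.1, i.2.2.2, i.2.2.1), fun _ => rfl, fun _ => rfl⟩ ?_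
    rintro ⟨a, d, q, b⟩
    simp only [Equiv.coe_fn_mk]
  -- symmetric x antisymmetric cancellation
  have k2c : (∑ m, ∑ c, ∑ a, ∑ d,
        (e a * e c * Fm a d * f d m c * DF m c a - f m d a * e c * e a * Fm c d * DF m c a)) = 0 := by
    refine vanish4 ⟨fun i => (i.1, i.2.2.1, i.2.1, i.2.2.2),
      fun i => (i.1, i.2.2.1, i.2.1, i.2.2.2), fun _ => rfl, fun _ => rfl⟩ ?_
    rintro ⟨m, c, a, d⟩
    simp only [Equiv.coe_fn_mk]
    rw [hf1 d m a, hf1 m d c, hDFa m a c]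
    ring
  have k2 : (∑ a, ∑ c, ∑ d, ∑ m, e a * e c * Fm a d * f d m c * DF m c a)
      - (∑ a, ∑ d, ∑ q, ∑ b, f a q b * e d * e b * Fm d q * DF a d b) = 0 := by
    rw [k2a, k2b, sum4_sub]
    exact k2c
  -- k3 : T2an = Wn
  have k3 : (∑ a, ∑ d, ∑ q, ∑ b, f d q b * e a * e b * Fm a b * DF a d q)
      = ∑ m, ∑ c, ∑ a, ∑ p, e m * e p * Fm m p * f c a p * DF m c a :=
    sum4_congr fun m c a p => by ring
  -- T3an canonical
  have k4 : (∑ a, ∑ d, ∑ q, ∑ b, f a q b * e d * e b * Fm d b * DF a d q)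
      = ∑ m, ∑ c, ∑ a, ∑ p, e c * e p * Fm c p * f m a p * DF m c a :=
    sum4_congr fun m c a p => by ring
  -- first representation of T3an
  have k5 : (∑ m, ∑ c, ∑ a, ∑ p, e c * e p * Fm c p * f m a p * DF m c a)
      = ∑ m, ∑ c, ∑ a, ∑ p, -(e m * e p * Fm m p * f c a p * DF c a m) := by
    refine relabel4 ⟨fun i => (i.2.1, i.1, i.2.2.1, i.2.2.2),
      fun i => (i.2.1, i.1, i.2.2.1, i.2.2.2), fun _ => rfl, fun _ => rfl⟩ ?_
    rintro ⟨m, c, a, p⟩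
    simp only [Equiv.coe_fn_mk]
    rw [hDFa m a c]
    ring
  -- second representation of T3an
  have k6 : (∑ m, ∑ c, ∑ a, ∑ p, e c * e p * Fm c p * f m a p * DF m c a)
      = ∑ m, ∑ c, ∑ a, ∑ p, -(e m * e p * Fm m p * f c a p * DF a m c) := by
    refine relabel4 ⟨fun i => (i.2.1, i.2.2.1, i.1, i.2.2.2),
      fun i => (i.2.2.1, i.1, i.2.1, i.2.2.2), fun _ => rfl, fun _ => rfl⟩ ?_
    rintro ⟨m, c, a, p⟩
    simp only [Equiv.coe_fn_mk]
    rw [hf1 a m p]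
    ring
  have k5n : (∑ m, ∑ c, ∑ a, ∑ p, -(e m * e p * Fm m p * f c a p * DF c a m))
      = - ∑ m, ∑ c, ∑ a, ∑ p, e m * e p * Fm m p * f c a p * DF c a m := by
    simp [Finset.sum_neg_distrib]
  have k6n : (∑ m, ∑ c, ∑ a, ∑ p, -(e m * e p * Fm m p * f c a p * DF a m c))
      = - ∑ m, ∑ c, ∑ a, ∑ p, e m * e p * Fm m p * f c a p * DF a m c := by
    simp [Finset.sum_neg_distrib]
  -- merge into Qn
  have k7 : (∑ m, ∑ c, ∑ a, ∑ p, e m * e p * Fm m p * f c a p * (DF m c a + DF c a m + DF a m c))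
      = (∑ m, ∑ c, ∑ a, ∑ p, e m * e p * Fm m p * f c a p * DF m c a)
        + (∑ m, ∑ c, ∑ a, ∑ p, e m * e p * Fm m p * f c a p * DF c a m)
        + (∑ m, ∑ c, ∑ a, ∑ p, e m * e p * Fm m p * f c a p * DF a m c) := by
    rw [sum4_add, sum4_add]
    exact sum4_congr fun m c a p => by ring
  -- Bianchi substitution
  have k8 : (∑ m, ∑ c, ∑ a, ∑ p, e m * e p * Fm m p * f c a p * (DF m c a + DF c a m + DF a m c))
      = (∑ m, ∑ c, ∑ a, ∑ p, ∑ s, ∑ t, e m * e p * Fm m p * f c a p * (Fm m s * f s t c * Fm t a))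
        + (∑ m, ∑ c, ∑ a, ∑ p, ∑ s, ∑ t, e m * e p * Fm m p * f c a p * (Fm c s * f s t a * Fm t m))
        + (∑ m, ∑ c, ∑ a, ∑ p, ∑ s, ∑ t, e m * e p * Fm m p * f c a p * (Fm a s * f s t m * Fm t c)) := by
    have step : ∀ m c a p : I4, e m * e p * Fm m p * f c a p * (DF m c a + DF c a m + DF a m c)
        = (∑ s, ∑ t, e m * e p * Fm m p * f c a p * (Fm m s * f s t c * Fm t a))
          + ((∑ s, ∑ t, e m * e p * Fm m p * f c a p * (Fm c s * f s t a * Fm t m))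
          + (∑ s, ∑ t, e m * e p * Fm m p * f c a p * (Fm a s * f s t m * Fm t c))) := by
      intro m c a p
      rw [hB m c a, mul_add, mul_add, hmulsum, hmulsum, hmulsum]
      ring
    rw [sum4_congr step]
    simp only [Finset.sum_add_distrib]
    ring
  -- Z3 vanishes
  have k9 : (∑ m, ∑ c, ∑ a, ∑ p, ∑ s, ∑ t,
        e m * e p * Fm m p * f c a p * (Fm a s * f s t m * Fm t c)) = 0 := by
    refine vanish6 ⟨fun i => (i.2.2.2.1, i.2.2.2.2.2, i.2.2.2.2.1, i.1, i.2.2.1, i.2.1),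
      fun i => (i.2.2.2.1, i.2.2.2.2.2, i.2.2.2.2.1, i.1, i.2.2.1, i.2.1),
      fun _ => rfl, fun _ => rfl⟩ ?_
    rintro ⟨m, c, a, p, st, t⟩
    simp only [Equiv.coe_fn_mk]
    rw [hFm p m, hf1 t st m, hFm st a, hf1 a c p, hFm c t]
    ring
  -- Z2 = Z1
  have k10 : (∑ m, ∑ c, ∑ a, ∑ p, ∑ s, ∑ t,
        e m * e p * Fm m p * f c a p * (Fm c s * f s t a * Fm t m))
      = ∑ m, ∑ c, ∑ a, ∑ p, ∑ s, ∑ t,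
        e m * e p * Fm m p * f c a p * (Fm m s * f s t c * Fm t a) := by
    refine relabel6 ⟨fun i => (i.1, i.2.2.1, i.2.1, i.2.2.2.1, i.2.2.2.2.2, i.2.2.2.2.1),
      fun i => (i.1, i.2.2.1, i.2.1, i.2.2.2.1, i.2.2.2.2.2, i.2.2.2.2.1),
      fun _ => rfl, fun _ => rfl⟩ ?_
    rintro ⟨m, c, a, p, st, t⟩
    simp only [Equiv.coe_fn_mk]
    rw [hf1 a c p, hf1 t st a, hFm st c, hFm t m]
    ring
  -- reorder Z1 binders, contract with Jacobi
  have k11a : (∑ m, ∑ c, ∑ a, ∑ p, ∑ s, ∑ t,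
        e m * e p * Fm m p * f c a p * (Fm m s * f s t c * Fm t a))
      = ∑ m, ∑ a, ∑ p, ∑ s, ∑ t, ∑ c,
        e m * e p * Fm m p * f c a p * (Fm m s * f s t c * Fm t a) := by
    refine relabel6 ⟨fun i => (i.1, i.2.2.1, i.2.2.2.1, i.2.2.2.2.1, i.2.2.2.2.2, i.2.1),
      fun i => (i.1, i.2.2.2.2.2, i.2.1, i.2.2.1, i.2.2.2.1, i.2.2.2.2.1),
      fun _ => rfl, fun _ => rfl⟩ ?_
    rintro ⟨m, c, a, p, st, t⟩
    simp only [Equiv.coe_fn_mk]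
  have k11 : (∑ m, ∑ a, ∑ p, ∑ s, ∑ t, ∑ c,
        e m * e p * Fm m p * f c a p * (Fm m s * f s t c * Fm t a))
      = (∑ m, ∑ a, ∑ p, ∑ s, ∑ t, ∑ l,
          e m * e p * Fm m p * Fm m s * Fm t a * (f s l p * f t a l))
        + ∑ m, ∑ a, ∑ p, ∑ s, ∑ t, ∑ l,
          e m * e p * Fm m p * Fm m s * Fm t a * (f t l p * f a s l) := by
    have step : ∀ m a p s t : I4, (∑ c, e m * e p * Fm m p * f c a p * (Fm m s * f s t c * Fm t a))
        = ∑ l, (e m * e p * Fm m p * Fm m s * Fm t a * (f s l p * f t a l)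
            + e m * e p * Fm m p * Fm m s * Fm t a * (f t l p * f a s l)) := by
      intro m a p s t
      calc (∑ c, e m * e p * Fm m p * f c a p * (Fm m s * f s t c * Fm t a))
          = ∑ c, (e m * e p * Fm m p * Fm m s * Fm t a) * (f c a p * f s t c) :=
            Finset.sum_congr rfl fun c _ => by ring
        _ = (e m * e p * Fm m p * Fm m s * Fm t a) * ∑ c, f c a p * f s t c :=
            (Finset.mul_sum _ _ _).symm
        _ = (e m * e p * Fm m p * Fm m s * Fm t a)
              * ∑ l, (f s l p * f t a l + f t l p * f a s l) := by rw [hJc s t a p]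
        _ = ∑ l, (e m * e p * Fm m p * Fm m s * Fm t a)
              * (f s l p * f t a l + f t l p * f a s l) := Finset.mul_sum _ _ _
        _ = ∑ l, (e m * e p * Fm m p * Fm m s * Fm t a * (f s l p * f t a l)
              + e m * e p * Fm m p * Fm m s * Fm t a * (f t l p * f a s l)) :=
            Finset.sum_congr rfl fun l _ => by ring
    rw [sum5_congr step]
    simp only [Finset.sum_add_distrib]
  -- Jacobi on Y2
  have k12 : (∑ m, ∑ a, ∑ p, ∑ s, ∑ t, ∑ l,
        e m * e p * Fm m p * Fm m s * Fm t a * (f t l p * f a s l))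
      = - (∑ m, ∑ a, ∑ p, ∑ s, ∑ t, ∑ l,
            e m * e p * Fm m p * Fm m s * Fm t a * (f s l p * f t a l))
        + - ∑ m, ∑ a, ∑ p, ∑ s, ∑ t, ∑ l,
            e m * e p * Fm m p * Fm m s * Fm t a * (f a l p * f s t l) := by
    have step : ∀ m a p s t : I4,
        (∑ l, e m * e p * Fm m p * Fm m s * Fm t a * (f t l p * f a s l))
        = ∑ l, (-(e m * e p * Fm m p * Fm m s * Fm t a * (f s l p * f t a l))
            + -(e m * e p * Fm m p * Fm m s * Fm t a * (f a l p * f s t l))) := by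
      intro m a p s t
      calc (∑ l, e m * e p * Fm m p * Fm m s * Fm t a * (f t l p * f a s l))
          = ∑ l, (e m * e p * Fm m p * Fm m s * Fm t a) * (f t l p * f a s l) :=
            Finset.sum_congr rfl fun l _ => by ring
        _ = (e m * e p * Fm m p * Fm m s * Fm t a) * ∑ l, f t l p * f a s l :=
            (Finset.mul_sum _ _ _).symm
        _ = (e m * e p * Fm m p * Fm m s * Fm t a)
              * (- (∑ l, f s l p * f t a l) - ∑ l, f a l p * f s t l) := by rw [hJc2 s t a p]
        _ = (e m * e p * Fm m p * Fm m s * Fm t a) * (∑ l, -(f s l p * f t a l))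
            + (e m * e p * Fm m p * Fm m s * Fm t a) * (∑ l, -(f a l p * f s t l)) := by
            simp [Finset.sum_neg_distrib]; ring
        _ = (∑ l, (e m * e p * Fm m p * Fm m s * Fm t a) * -(f s l p * f t a l))
            + ∑ l, (e m * e p * Fm m p * Fm m s * Fm t a) * -(f a l p * f s t l) := by
            rw [Finset.mul_sum, Finset.mul_sum]
        _ = ∑ l, (-(e m * e p * Fm m p * Fm m s * Fm t a * (f s l p * f t a l))
            + -(e m * e p * Fm m p * Fm m s * Fm t a * (f a l p * f s t l))) := by
            rw [← Finset.sum_add_distrib]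
            exact Finset.sum_congr rfl fun l _ => by ring
    rw [sum5_congr step]
    simp only [Finset.sum_add_distrib, Finset.sum_neg_distrib]
  -- Y3 = Y2
  have k13 : (∑ m, ∑ a, ∑ p, ∑ s, ∑ t, ∑ l,
        e m * e p * Fm m p * Fm m s * Fm t a * (f a l p * f s t l))
      = ∑ m, ∑ a, ∑ p, ∑ s, ∑ t, ∑ l,
        e m * e p * Fm m p * Fm m s * Fm t a * (f t l p * f a s l) := by
    refine relabel6 ⟨fun i => (i.1, i.2.2.2.2.1, i.2.2.1, i.2.2.2.1, i.2.1, i.2.2.2.2.2),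
      fun i => (i.1, i.2.2.2.2.1, i.2.2.1, i.2.2.2.1, i.2.1, i.2.2.2.2.2),
      fun _ => rfl, fun _ => rfl⟩ ?_
    rintro ⟨m, a, p, st, t, l⟩
    simp only [Equiv.coe_fn_mk]
    rw [hFm a t, hf1 t st l]
    ring
  -- R2 vanishes
  have k14 : (∑ c, ∑ a, ∑ b, ∑ d, ∑ q, ∑ m,
        f a b c * Fm a b * Fm d q * f d q m * e c * e m * Fm c m) = 0 := by
    refine vanish6 ⟨fun i => (i.2.2.2.2.2, i.2.2.2.1, i.2.2.2.2.1, i.2.1, i.2.2.1, i.1),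
      fun i => (i.2.2.2.2.2, i.2.2.2.1, i.2.2.2.2.1, i.2.1, i.2.2.1, i.1),
      fun _ => rfl, fun _ => rfl⟩ ?_
    rintro ⟨c, a, b, d, q, m⟩
    simp only [Equiv.coe_fn_mk]
    rw [hFm m c]
    ring
  -- Y1 in terms of R3
  have k15 : (∑ m, ∑ a, ∑ p, ∑ s, ∑ t, ∑ l,
        e m * e p * Fm m p * Fm m s * Fm t a * (f s l p * f t a l))
      = ∑ c, ∑ a, ∑ b, ∑ d, ∑ q, ∑ m,
        -(f a b c * Fm a b * Fm d q * f c q m * e d * e m * Fm d m) := by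
    refine relabel6 ⟨fun i => (i.2.2.2.2.2, i.2.2.2.2.1, i.2.1, i.1, i.2.2.2.1, i.2.2.1),
      fun i => (i.2.2.2.1, i.2.2.1, i.2.2.2.2.2, i.2.2.2.2.1, i.2.1, i.1),
      fun _ => rfl, fun _ => rfl⟩ ?_
    rintro ⟨m, a, p, st, t, l⟩
    simp only [Equiv.coe_fn_mk]
    rw [hf1 l st p]
    ring
  have k15n : (∑ c, ∑ a, ∑ b, ∑ d, ∑ q, ∑ m,
        -(f a b c * Fm a b * Fm d q * f c q m * e d * e m * Fm d m))
      = - ∑ c, ∑ a, ∑ b, ∑ d, ∑ q, ∑ m,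
          f a b c * Fm a b * Fm d q * f c q m * e d * e m * Fm d m := by
    simp [Finset.sum_neg_distrib]
  rw [e2, e3, eR]
  linarith [k1, k2, k3, k4, k5, k5n, k6, k6n, k7, k8, k9, k10, k11a, k11, k12, k13, k14, k15, k15n]

end Key

theorem stmt3 (f : Fin 4 → Fin 4 → Fin 4 → ℝ) (hf : IsStructureConstants f)
    (γ ρ : (Fin 4 → ℝ) → Matrix (Fin 4) (Fin 4) ℝ)
    (hγ : ∀ i j, ContDiff ℝ (⊤ : ℕ∞) (fun B => γ B i j))
    (hρ : ∀ i j, ContDiff ℝ (⊤ : ℕ∞) (fun B => ρ B i j))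
    (A : (Fin 4 → ℝ) → Fin 4 → ℝ) (hA : ContDiff ℝ (⊤ : ℕ∞) A)
    (F : (Fin 4 → ℝ) → Matrix (Fin 4) (Fin 4) ℝ)
    (hFsm : ∀ a b, ContDiff ℝ (⊤ : ℕ∞) (fun x => F x a b))
    (hFas : ∀ (x : Fin 4 → ℝ) (a b : Fin 4), F x a b = - F x b a)
    (hBianchi : ∀ (x : Fin 4 → ℝ) (a b c : Fin 4),
      (Dcov f γ ρ A a (fun y => F y b c) x - ∑ d, ∑ e, F x a d * f d e b * F x e c)
      + (Dcov f γ ρ A b (fun y => F y c a) x - ∑ d, ∑ e, F x b d * f d e c * F x e a)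
      + (Dcov f γ ρ A c (fun y => F y a b) x - ∑ d, ∑ e, F x c d * f d e a * F x e b) = 0)
    (hComm : ∀ ψ : (Fin 4 → ℝ) → ℝ, ContDiff ℝ (⊤ : ℕ∞) ψ →
      ∀ (a b : Fin 4) (x : Fin 4 → ℝ),
        Dcov f γ ρ A a (fun y => Dcov f γ ρ A b ψ y) x
          - Dcov f γ ρ A b (fun y => Dcov f γ ρ A a ψ y) x
        = pb f (fun y => F y a b) ψ x
          + (∑ d, ∑ e, F x a d * f d e b * Dcov f γ ρ A e ψ x)
          - ∑ d, ∑ e, F x b d * f d e a * Dcov f γ ρ A e ψ x) :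
    ∀ x : Fin 4 → ℝ,
      ∑ a, Dcov f γ ρ A a (fun y => EC f γ ρ A F a y) x
        = (1/2) * ∑ c, ∑ a, ∑ b, f a b c * F x a b * EC f γ ρ A F c x := by
  intro x
  obtain ⟨hf1, hf2⟩ := hf
  -- basic differentiability / smoothness facts
  have hdF : ∀ (b c : Fin 4) (y : Fin 4 → ℝ), DifferentiableAt ℝ (fun z => F z b c) y :=
    fun b c y => ((hFsm b c).differentiable (by simp)).differentiableAt
  have hFneg : ∀ b c : Fin 4, (fun z => F z b c) = fun z => -(F z c b) :=
    fun b c => funext fun z => hFas z b c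
  have hFupf : ∀ c a : Fin 4, (fun y => Fup F c a y) = fun y => (ηm c c * ηm a a) * F y c a :=
    fun c a => funext fun y => Fup_eq F c a y
  have hsmFup : ∀ c a : Fin 4, ContDiff ℝ (⊤ : ℕ∞) (fun y => Fup F c a y) := by
    intro c a
    rw [hFupf c a]
    exact contDiff_const.mul (hFsm c a)
  have hsmD : ∀ m b c : Fin 4, ContDiff ℝ (⊤ : ℕ∞) (fun y => Dcov f γ ρ A m (fun z => F z b c) y) :=
    fun m b c => contDiff_Dcov hγ hρ hA (hFsm b c) m
  have hsmDFup : ∀ c a : Fin 4, ContDiff ℝ (⊤ : ℕ∞) (fun y => Dcov f γ ρ A c (fun z => Fup F c a z) y) :=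
    fun c a => contDiff_Dcov hγ hρ hA (hsmFup c a) c
  have hDFanti : ∀ m b c : Fin 4, Dcov f γ ρ A m (fun z => F z b c) x
      = - Dcov f γ ρ A m (fun z => F z c b) x := by
    intro m b c
    rw [hFneg b c, Dcov_neg]
  -- differentiability of the three EC blocks
  have hd1 : ∀ a : Fin 4, DifferentiableAt ℝ
      (fun y => ∑ c, Dcov f γ ρ A c (fun z => Fup F c a z) y) x :=
    fun a => DifferentiableAt.fun_sum fun c _ =>
      (((hsmDFup c a).differentiable (by simp)).differentiableAt)
  have hsmT2 : ∀ a d q b : Fin 4, ContDiff ℝ (⊤ : ℕ∞) (fun y => F y d q * f d q b * Fup F a b y) :=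
    fun a d q b => ((hFsm d q).mul contDiff_const).mul (hsmFup a b)
  have hsmT3 : ∀ a d q b : Fin 4, ContDiff ℝ (⊤ : ℕ∞) (fun y => F y d q * f a q b * Fup F d b y) :=
    fun a d q b => ((hFsm d q).mul contDiff_const).mul (hsmFup d b)
  have hd2 : ∀ a : Fin 4, DifferentiableAt ℝ
      (fun y => (1/2) * ∑ d, ∑ q, ∑ b, F y d q * f d q b * Fup F a b y) x := by
    intro a
    refine DifferentiableAt.const_mul ?_ _
    exact DifferentiableAt.fun_sum fun d _ => DifferentiableAt.fun_sum fun q _ =>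
      DifferentiableAt.fun_sum fun b _ => ((hsmT2 a d q b).differentiable (by simp)).differentiableAt
  have hd3 : ∀ a : Fin 4, DifferentiableAt ℝ
      (fun y => ∑ d, ∑ q, ∑ b, F y d q * f a q b * Fup F d b y) x :=
    fun a => DifferentiableAt.fun_sum fun d _ => DifferentiableAt.fun_sum fun q _ =>
      DifferentiableAt.fun_sum fun b _ => ((hsmT3 a d q b).differentiable (by simp)).differentiableAt
  -- split Dcov over the three blocks of EC
  have hEC1 : ∀ a : Fin 4, Dcov f γ ρ A a (fun y => EC f γ ρ A F a y) x
      = Dcov f γ ρ A a (fun y => ∑ c, Dcov f γ ρ A c (fun z => Fup F c a z) y) x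
        + Dcov f γ ρ A a (fun y => (1/2) * ∑ d, ∑ q, ∑ b, F y d q * f d q b * Fup F a b y) x
        - Dcov f γ ρ A a (fun y => ∑ d, ∑ q, ∑ b, F y d q * f a q b * Fup F d b y) x := by
    intro a
    have h := Dcov_sub (f := f) (γ := γ) (ρ := ρ) (A := A) (a := a) (x := x)
      (u := fun y => (fun y' => ∑ c, Dcov f γ ρ A c (fun z => Fup F c a z) y') y
        + (fun y' => (1/2) * ∑ d, ∑ q, ∑ b, F y' d q * f d q b * Fup F a b y') y)
      (v := fun y => ∑ d, ∑ q, ∑ b, F y d q * f a q b * Fup F d b y)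
      ((hd1 a).add (hd2 a)) (hd3 a)
    rw [Dcov_add (hd1 a) (hd2 a)] at h
    exact h
  -- first block
  have hP1 : ∀ a : Fin 4, Dcov f γ ρ A a
        (fun y => ∑ c, Dcov f γ ρ A c (fun z => Fup F c a z) y) x
      = ∑ c, ηm c c * ηm a a *
          Dcov f γ ρ A a (fun y => Dcov f γ ρ A c (fun z => F z c a) y) x := by
    intro a
    rw [Dcov_sum (g := fun c => fun y => Dcov f γ ρ A c (fun z => Fup F c a z) y)
      (fun c _ => ((hsmDFup c a).differentiable (by simp)).differentiableAt)]
    refine Finset.sum_congr rfl fun c _ => ?_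
    have hfe : (fun y => Dcov f γ ρ A c (fun z => Fup F c a z) y)
        = fun y => (ηm c c * ηm a a) * Dcov f γ ρ A c (fun z => F z c a) y := by
      funext y
      rw [hFupf c a, Dcov_const_mul (hdF c a y)]
    rw [hfe, Dcov_const_mul (((hsmD c c a).differentiable (by simp)).differentiableAt)]
  -- second block
  have hP2 : ∀ a : Fin 4, Dcov f γ ρ A a
        (fun y => (1/2) * ∑ d, ∑ q, ∑ b, F y d q * f d q b * Fup F a b y) x
      = (1/2) * ∑ d, ∑ q, ∑ b, f d q b * (ηm a a * ηm b b) *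
          (F x d q * Dcov f γ ρ A a (fun z => F z a b) x
            + F x a b * Dcov f γ ρ A a (fun z => F z d q) x) := by
    intro a
    rw [Dcov_const_mul (by
      exact DifferentiableAt.fun_sum fun d _ => DifferentiableAt.fun_sum fun q _ =>
        DifferentiableAt.fun_sum fun b _ => ((hsmT2 a d q b).differentiable (by simp)).differentiableAt)]
    congr 1
    rw [Dcov_sum (g := fun d => fun y => ∑ q, ∑ b, F y d q * f d q b * Fup F a b y)
      (fun d _ => DifferentiableAt.fun_sum fun q _ => DifferentiableAt.fun_sum fun b _ =>
        ((hsmT2 a d q b).differentiable (by simp)).differentiableAt)]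
    refine Finset.sum_congr rfl fun d _ => ?_
    rw [Dcov_sum (g := fun q => fun y => ∑ b, F y d q * f d q b * Fup F a b y)
      (fun q _ => DifferentiableAt.fun_sum fun b _ =>
        ((hsmT2 a d q b).differentiable (by simp)).differentiableAt)]
    refine Finset.sum_congr rfl fun q _ => ?_
    rw [Dcov_sum (g := fun b => fun y => F y d q * f d q b * Fup F a b y)
      (fun b _ => ((hsmT2 a d q b).differentiable (by simp)).differentiableAt)]
    refine Finset.sum_congr rfl fun b _ => ?_
    have hfe : (fun y => F y d q * f d q b * Fup F a b y)
        = fun y => (f d q b * (ηm a a * ηm b b)) * (F y d q * F y a b) := by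
      funext y
      rw [Fup_eq]
      ring
    rw [hfe, Dcov_const_mul (u := fun y => F y d q * F y a b) ((hdF d q x).mul (hdF a b x)), Dcov_mul (hdF d q x) (hdF a b x)]
  -- third block
  have hP3 : ∀ a : Fin 4, Dcov f γ ρ A a
        (fun y => ∑ d, ∑ q, ∑ b, F y d q * f a q b * Fup F d b y) x
      = ∑ d, ∑ q, ∑ b, f a q b * (ηm d d * ηm b b) *
          (F x d q * Dcov f γ ρ A a (fun z => F z d b) x
            + F x d b * Dcov f γ ρ A a (fun z => F z d q) x) := by
    intro a
    rw [Dcov_sum (g := fun d => fun y => ∑ q, ∑ b, F y d q * f a q b * Fup F d b y)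
      (fun d _ => DifferentiableAt.fun_sum fun q _ => DifferentiableAt.fun_sum fun b _ =>
        ((hsmT3 a d q b).differentiable (by simp)).differentiableAt)]
    refine Finset.sum_congr rfl fun d _ => ?_
    rw [Dcov_sum (g := fun q => fun y => ∑ b, F y d q * f a q b * Fup F d b y)
      (fun q _ => DifferentiableAt.fun_sum fun b _ =>
        ((hsmT3 a d q b).differentiable (by simp)).differentiableAt)]
    refine Finset.sum_congr rfl fun q _ => ?_
    rw [Dcov_sum (g := fun b => fun y => F y d q * f a q b * Fup F d b y)
      (fun b _ => ((hsmT3 a d q b).differentiable (by simp)).differentiableAt)]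
    refine Finset.sum_congr rfl fun b _ => ?_
    have hfe : (fun y => F y d q * f a q b * Fup F d b y)
        = fun y => (f a q b * (ηm d d * ηm b b)) * (F y d q * F y d b) := by
      funext y
      rw [Fup_eq]
      ring
    rw [hfe, Dcov_const_mul (u := fun y => F y d q * F y d b) ((hdF d q x).mul (hdF d b x)), Dcov_mul (hdF d q x) (hdF d b x)]
  have hmulsum2 : ∀ (C : ℝ) (u : Fin 4 → Fin 4 → ℝ),
      C * (∑ s, ∑ t, u s t) = ∑ s, ∑ t, C * u s t := by
    intro C u
    rw [Finset.mul_sum]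
    exact Finset.sum_congr rfl fun s _ => Finset.mul_sum _ _ _
  -- the commutator step
  have hswap : (∑ a, ∑ c, ηm c c * ηm a a *
        Dcov f γ ρ A a (fun y => Dcov f γ ρ A c (fun z => F z c a) y) x)
      = ∑ a, ∑ c, -(ηm c c * ηm a a *
        Dcov f γ ρ A c (fun y => Dcov f γ ρ A a (fun z => F z c a) y) x) := by
    rw [s2_12 (fun a c => ηm c c * ηm a a *
      Dcov f γ ρ A a (fun y => Dcov f γ ρ A c (fun z => F z c a) y) x)]
    refine Finset.sum_congr rfl fun a _ => Finset.sum_congr rfl fun c _ => ?_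
    have h1 : (fun y => Dcov f γ ρ A a (fun z => F z a c) y)
        = fun y => -(Dcov f γ ρ A a (fun z => F z c a) y) := by
      funext y
      rw [hFneg a c, Dcov_neg]
    rw [h1, Dcov_neg]
    ring
  have hpb0 : ∀ a c : Fin 4, pb f (fun y => F y a c) (fun z => F z c a) x = 0 := by
    intro a c
    rw [hFneg c a, pb_neg₂, pb_self hf1]
    ring
  have hXsplit : ∀ a c : Fin 4, ηm c c * ηm a a *
        (Dcov f γ ρ A a (fun y => Dcov f γ ρ A c (fun z => F z c a) y) x
          - Dcov f γ ρ A c (fun y => Dcov f γ ρ A a (fun z => F z c a) y) x)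
      = (∑ d, ∑ q, ηm a a * ηm c c * F x a d * f d q c
            * Dcov f γ ρ A q (fun z => F z c a) x)
        - ∑ d, ∑ q, ηm a a * ηm c c * F x c d * f d q a
            * Dcov f γ ρ A q (fun z => F z c a) x := by
    intro a c
    have h := hComm (fun z => F z c a) (hFsm c a) a c x
    rw [hpb0 a c] at h
    rw [h]
    rw [show ηm c c * ηm a a *
        (0 + (∑ d, ∑ q, F x a d * f d q c * Dcov f γ ρ A q (fun z => F z c a) x)
          - ∑ d, ∑ q, F x c d * f d q a * Dcov f γ ρ A q (fun z => F z c a) x)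
      = (ηm c c * ηm a a) * (∑ d, ∑ q, F x a d * f d q c * Dcov f γ ρ A q (fun z => F z c a) x)
        - (ηm c c * ηm a a) * ∑ d, ∑ q, F x c d * f d q a * Dcov f γ ρ A q (fun z => F z c a) x
      from by ring, hmulsum2, hmulsum2]
    congr 1
    · exact Finset.sum_congr rfl fun d _ => Finset.sum_congr rfl fun q _ => by ring
    · exact Finset.sum_congr rfl fun d _ => Finset.sum_congr rfl fun q _ => by ring
  have hT1a : (∑ a, ∑ c, ηm c c * ηm a a *
        (Dcov f γ ρ A a (fun y => Dcov f γ ρ A c (fun z => F z c a) y) x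
          - Dcov f γ ρ A c (fun y => Dcov f γ ρ A a (fun z => F z c a) y) x))
      = 2 * ∑ a, ∑ c, ηm c c * ηm a a *
          Dcov f γ ρ A a (fun y => Dcov f γ ρ A c (fun z => F z c a) y) x := by
    have hsplit : (∑ a, ∑ c, ηm c c * ηm a a *
        (Dcov f γ ρ A a (fun y => Dcov f γ ρ A c (fun z => F z c a) y) x
          - Dcov f γ ρ A c (fun y => Dcov f γ ρ A a (fun z => F z c a) y) x))
      = (∑ a, ∑ c, ηm c c * ηm a a *
          Dcov f γ ρ A a (fun y => Dcov f γ ρ A c (fun z => F z c a) y) x)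
        - ∑ a, ∑ c, ηm c c * ηm a a *
          Dcov f γ ρ A c (fun y => Dcov f γ ρ A a (fun z => F z c a) y) x := by
      rw [Finset.sum_congr rfl fun (a : Fin 4) _ => Finset.sum_congr rfl fun (c : Fin 4) _ =>
        mul_sub (ηm c c * ηm a a) _ _]
      simp [Finset.sum_sub_distrib]
    have hneg : (∑ a, ∑ c, -(ηm c c * ηm a a *
          Dcov f γ ρ A c (fun y => Dcov f γ ρ A a (fun z => F z c a) y) x))
        = - ∑ a, ∑ c, ηm c c * ηm a a *
            Dcov f γ ρ A c (fun y => Dcov f γ ρ A a (fun z => F z c a) y) x := by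
      simp [Finset.sum_neg_distrib]
    rw [hneg] at hswap
    rw [hsplit]
    linarith [hswap]
  have hT1b : (∑ a, ∑ c, ηm c c * ηm a a *
        (Dcov f γ ρ A a (fun y => Dcov f γ ρ A c (fun z => F z c a) y) x
          - Dcov f γ ρ A c (fun y => Dcov f γ ρ A a (fun z => F z c a) y) x))
      = (∑ a, ∑ c, ∑ d, ∑ q, ηm a a * ηm c c * F x a d * f d q c
            * Dcov f γ ρ A q (fun z => F z c a) x)
        - ∑ a, ∑ c, ∑ d, ∑ q, ηm a a * ηm c c * F x c d * f d q a
            * Dcov f γ ρ A q (fun z => F z c a) x := by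
    rw [Finset.sum_congr rfl fun (a : Fin 4) _ => Finset.sum_congr rfl fun (c : Fin 4) _ =>
      hXsplit a c]
    simp [Finset.sum_sub_distrib]
  have hT1c : (∑ a, ∑ c, ∑ d, ∑ q, ηm a a * ηm c c * F x c d * f d q a
        * Dcov f γ ρ A q (fun z => F z c a) x)
      = - ∑ a, ∑ c, ∑ d, ∑ q, ηm a a * ηm c c * F x a d * f d q c
          * Dcov f γ ρ A q (fun z => F z c a) x := by
    have h := relabel4 (g := fun a c d q => ηm a a * ηm c c * F x c d * f d q a
        * Dcov f γ ρ A q (fun z => F z c a) x)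
      (h := fun a c d q => -(ηm a a * ηm c c * F x a d * f d q c
        * Dcov f γ ρ A q (fun z => F z c a) x))
      ⟨fun i => (i.2.1, i.1, i.2.2.1, i.2.2.2), fun i => (i.2.1, i.1, i.2.2.1, i.2.2.2),
        fun _ => rfl, fun _ => rfl⟩ ?_
    · rw [h]
      simp [Finset.sum_neg_distrib]
    · rintro ⟨a, c, d, q⟩
      simp only [Equiv.coe_fn_mk]
      rw [hDFanti q a c]
      ring
  have hT1 : (∑ a, ∑ c, ηm c c * ηm a a *
        Dcov f γ ρ A a (fun y => Dcov f γ ρ A c (fun z => F z c a) y) x)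
      = ∑ a, ∑ c, ∑ d, ∑ q, ηm a a * ηm c c * F x a d * f d q c
          * Dcov f γ ρ A q (fun z => F z c a) x := by
    linarith [hT1a, hT1b, hT1c]
  -- value of EC at x
  have hECval : ∀ c : Fin 4, EC f γ ρ A F c x
      = (∑ m, ηm m m * ηm c c * Dcov f γ ρ A m (fun z => F z m c) x)
        + (1/2) * (∑ d, ∑ q, ∑ b', F x d q * f d q b' * (ηm c c * ηm b' b' * F x c b'))
        - ∑ d, ∑ q, ∑ b', F x d q * f c q b' * (ηm d d * ηm b' b' * F x d b') := by
    intro c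
    have A1 : (∑ m, Dcov f γ ρ A m (fun y => Fup F m c y) x)
        = ∑ m, ηm m m * ηm c c * Dcov f γ ρ A m (fun z => F z m c) x := by
      refine Finset.sum_congr rfl fun m _ => ?_
      rw [hFupf m c, Dcov_const_mul (hdF m c x)]
    have A2 : (∑ d, ∑ q, ∑ b', F x d q * f d q b' * Fup F c b' x)
        = ∑ d, ∑ q, ∑ b', F x d q * f d q b' * (ηm c c * ηm b' b' * F x c b') := by
      refine Finset.sum_congr rfl fun d _ => Finset.sum_congr rfl fun q _ =>
        Finset.sum_congr rfl fun b' _ => ?_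
      rw [Fup_eq]
    have A3 : (∑ d, ∑ q, ∑ b', F x d q * f c q b' * Fup F d b' x)
        = ∑ d, ∑ q, ∑ b', F x d q * f c q b' * (ηm d d * ηm b' b' * F x d b') := by
      refine Finset.sum_congr rfl fun d _ => Finset.sum_congr rfl fun q _ =>
        Finset.sum_congr rfl fun b' _ => ?_
      rw [Fup_eq]
    show (∑ m, Dcov f γ ρ A m (fun y => Fup F m c y) x)
        + (1/2) * (∑ d, ∑ q, ∑ b', F x d q * f d q b' * Fup F c b' x)
        - (∑ d, ∑ q, ∑ b', F x d q * f c q b' * Fup F d b' x) = _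
    rw [A1, A2, A3]
  -- assemble the left-hand side
  have hLHS : (∑ a, Dcov f γ ρ A a (fun y => EC f γ ρ A F a y) x)
      = (∑ a, ∑ c, ∑ d, ∑ q, ηm a a * ηm c c * F x a d * f d q c
            * Dcov f γ ρ A q (fun z => F z c a) x)
        + (1/2) * (∑ a, ∑ d, ∑ q, ∑ b, f d q b * (ηm a a * ηm b b) *
            (F x d q * Dcov f γ ρ A a (fun z => F z a b) x
              + F x a b * Dcov f γ ρ A a (fun z => F z d q) x))
        - ∑ a, ∑ d, ∑ q, ∑ b, f a q b * (ηm d d * ηm b b) *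
            (F x d q * Dcov f γ ρ A a (fun z => F z d b) x
              + F x d b * Dcov f γ ρ A a (fun z => F z d q) x) := by
    rw [Finset.sum_congr rfl fun (a : Fin 4) _ => (hEC1 a).trans
      (by rw [hP1 a, hP2 a, hP3 a])]
    simp only [Finset.sum_sub_distrib, Finset.sum_add_distrib]
    rw [← Finset.mul_sum, hT1]
  have hRHSval : (∑ c, ∑ a, ∑ b, f a b c * F x a b * EC f γ ρ A F c x)
      = ∑ c, ∑ a, ∑ b, f a b c * F x a b *
          ((∑ m, ηm m m * ηm c c * Dcov f γ ρ A m (fun z => F z m c) x)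
            + (1/2) * (∑ d, ∑ q, ∑ b', F x d q * f d q b' * (ηm c c * ηm b' b' * F x c b'))
            - ∑ d, ∑ q, ∑ b', F x d q * f c q b' * (ηm d d * ηm b' b' * F x d b')) :=
    Finset.sum_congr rfl fun c _ => Finset.sum_congr rfl fun a _ =>
      Finset.sum_congr rfl fun b _ => by rw [hECval c]
  rw [hLHS, hRHSval]
  exact key f hf1 hf2 (fun i => ηm i i) (fun a b => F x a b) (fun a b => hFas x a b)
    (fun m b c => Dcov f γ ρ A m (fun z => F z b c) x) (fun m b c => hDFanti m b c)
    (by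
      intro m c a
      have h := hBianchi x m c a
      linarith)
end

section
/- Let λ, ε, k0, k3, α ∈ ℝ, σ ∈ {+1,−1}, and let A : ℝ⁴ → ℝ⁴ be the plane-wave ansatz. With the κ-Minkowski structure constants, the κ-Minkowski matrices γ, ρ, the Lie-Poisson bracket, the field strength F, the covariant derivative D, and the generalized expression E_G with parameter α, one has for every x ∈ ℝ⁴: E_G^0(x) = −λ ((2λ²(1+3α)ε² + 6α − 1) k0² + (6α + 2) k3²) ε²; E_G^1(x) = A_1(x) · ((1 − 2λ²(6α+1)ε²) k0² − k3²); E_G^2(x) = A_2(x) · ((1 − 2λ²(6α+1)ε²) k0² − k3²); E_G^3(x) = −(12α+1) λ ε² k0 k3. -/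
set_option autoImplicit false

open scoped BigOperators

/-- κ-Minkowski structure constants `f^{ab}_c = λ(δ^a_0 δ^b_c − δ^b_0 δ^a_c)`. -/
def fκ (lam : ℝ) (a b c : Fin 4) : ℝ :=
  lam * ((if a = 0 then 1 else 0) * (if b = c then 1 else 0)
       - (if b = 0 then 1 else 0) * (if a = c then 1 else 0))

/-- The κ-Minkowski matrix `γ(A)`: `γ^0_0 = 1`, `γ^0_c = −λ A_c` (c = 1,2,3),
`γ^l_c = δ^l_c` for `l = 1,2,3` (upper index = row). -/
def γκ (lam : ℝ) (A : Fin 4 → ℝ) : Matrix (Fin 4) (Fin 4) ℝ :=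
  fun l c => if l = 0 then (if c = 0 then 1 else -lam * A c)
             else (if l = c then 1 else 0)

/-- The κ-Minkowski matrix `ρ(A) = diag(1, e^{λA_0}, e^{λA_0}, e^{λA_0})`. -/
noncomputable def ρκ (lam : ℝ) (A : Fin 4 → ℝ) : Matrix (Fin 4) (Fin 4) ℝ :=
  fun m a => if m = a then (if m = 0 then 1 else Real.exp (lam * A 0)) else 0

/-- The phase `φ(x) = k0 x^0 − k3 x^3` of the plane wave. -/
def φpw (k0 k3 : ℝ) (x : Fin 4 → ℝ) : ℝ := k0 * x 0 - k3 * x 3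

/-- The plane-wave ansatz `A_0 = 0`, `A_1 = ε sin φ`, `A_2 = −σ ε cos φ`, `A_3 = 0`. -/
noncomputable def Apw (ε σ k0 k3 : ℝ) (x : Fin 4 → ℝ) : Fin 4 → ℝ :=
  ![0, ε * Real.sin (φpw k0 k3 x), -σ * ε * Real.cos (φpw k0 k3 x), 0]

/-- Field strength `F_{ab}(x)` of a gauge field `A` (as a matrix-valued function). -/
noncomputable def Fstr (f : Fin 4 → Fin 4 → Fin 4 → ℝ)
    (γ ρ : (Fin 4 → ℝ) → Matrix (Fin 4) (Fin 4) ℝ)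
    (A : (Fin 4 → ℝ) → Fin 4 → ℝ) (x : Fin 4 → ℝ) : Matrix (Fin 4) (Fin 4) ℝ :=
  fun a b => ∑ c, ∑ e, ρ (A x) c a * ρ (A x) e b *
    ((∑ l, γ (A x) l c * pd l (fun y => A y e) x)
      - (∑ l, γ (A x) l e * pd l (fun y => A y c) x)
      + pb f (fun y => A y c) (fun y => A y e) x)

/-- Field strength of the κ-Minkowski plane wave. -/
noncomputable def Fpw (lam ε σ k0 k3 : ℝ) : (Fin 4 → ℝ) → Matrix (Fin 4) (Fin 4) ℝ :=
  fun x => Fstr (fκ lam) (γκ lam) (ρκ lam) (Apw ε σ k0 k3) x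

/-- The generalized equations-of-motion expression `E_G^a(x)` with parameter `α`,
for the κ-Minkowski plane wave. -/
noncomputable def EGpw (α lam ε σ k0 k3 : ℝ) (a : Fin 4) (x : Fin 4 → ℝ) : ℝ :=
  EC (fκ lam) (γκ lam) (ρκ lam) (Apw ε σ k0 k3) (Fpw lam ε σ k0 k3) a x
    + α * ((∑ b, ∑ e, ∑ d, fκ lam b a b * Fpw lam ε σ k0 k3 x e d
              * Fup (Fpw lam ε σ k0 k3) e d x)
         + 4 * ∑ b, ∑ e, ∑ d, fκ lam b e b * Fpw lam ε σ k0 k3 x e d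
              * Fup (Fpw lam ε σ k0 k3) d a x)

section AuxKM

lemma pd_trig (k0 k3 p q r : ℝ) (l : Fin 4) (x : Fin 4 → ℝ) :
    pd l (fun y => p * Real.cos (φpw k0 k3 y) + q * Real.sin (φpw k0 k3 y) + r) x
      = (q * Real.cos (φpw k0 k3 x) - p * Real.sin (φpw k0 k3 x))
        * (if l = 0 then k0 else if l = 3 then -k3 else 0) := by
  have h0 : HasFDerivAt (fun y : Fin 4 → ℝ => y 0)
      (ContinuousLinearMap.proj 0 : (Fin 4 → ℝ) →L[ℝ] ℝ) x :=
    (hasFDerivAt_apply 0 x)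
  have h3 : HasFDerivAt (fun y : Fin 4 → ℝ => y 3)
      (ContinuousLinearMap.proj 3 : (Fin 4 → ℝ) →L[ℝ] ℝ) x :=
    (hasFDerivAt_apply 3 x)
  have hφ : HasFDerivAt (φpw k0 k3)
      (k0 • (ContinuousLinearMap.proj 0 : (Fin 4 → ℝ) →L[ℝ] ℝ)
        - k3 • (ContinuousLinearMap.proj 3 : (Fin 4 → ℝ) →L[ℝ] ℝ)) x :=
    (h0.const_mul k0).sub (h3.const_mul k3)
  have hsin : HasFDerivAt (fun y => Real.sin (φpw k0 k3 y))
      (Real.cos (φpw k0 k3 x) • (k0 • (ContinuousLinearMap.proj 0 : (Fin 4 → ℝ) →L[ℝ] ℝ)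
        - k3 • (ContinuousLinearMap.proj 3 : (Fin 4 → ℝ) →L[ℝ] ℝ))) x :=
    (Real.hasDerivAt_sin _).comp_hasFDerivAt x hφ
  have hcos : HasFDerivAt (fun y => Real.cos (φpw k0 k3 y))
      ((-Real.sin (φpw k0 k3 x)) • (k0 • (ContinuousLinearMap.proj 0 : (Fin 4 → ℝ) →L[ℝ] ℝ)
        - k3 • (ContinuousLinearMap.proj 3 : (Fin 4 → ℝ) →L[ℝ] ℝ))) x :=
    (Real.hasDerivAt_cos _).comp_hasFDerivAt x hφ
  have htot := ((hcos.const_mul p).add (hsin.const_mul q)).add_const r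
  rw [pd, HasFDerivAt.fderiv (f := fun y => p * Real.cos (φpw k0 k3 y) + q * Real.sin (φpw k0 k3 y) + r) htot]
  simp only [ContinuousLinearMap.add_apply, ContinuousLinearMap.smul_apply,
    ContinuousLinearMap.sub_apply, ContinuousLinearMap.proj_apply, smul_eq_mul]
  fin_cases l <;> simp [Pi.single_apply] <;> ring

lemma pdApw (ε σ k0 k3 : ℝ) (l e : Fin 4) (x : Fin 4 → ℝ) :
    pd l (fun y => Apw ε σ k0 k3 y e) x
      = ((if e = 1 then ε else 0) * Real.cos (φpw k0 k3 x)
          - (if e = 2 then -(σ * ε) else 0) * Real.sin (φpw k0 k3 x))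
        * (if l = 0 then k0 else if l = 3 then -k3 else 0) := by
  have h : (fun y => Apw ε σ k0 k3 y e)
      = fun y => (if e = 2 then -(σ * ε) else 0) * Real.cos (φpw k0 k3 y)
          + (if e = 1 then ε else 0) * Real.sin (φpw k0 k3 y) + 0 := by
    funext y; fin_cases e <;> simp [Apw] <;> ring
  rw [h, pd_trig]

/-- cosine-coefficient matrix of the plane-wave field strength -/
noncomputable def Pmκ (ε k0 k3 : ℝ) : Matrix (Fin 4) (Fin 4) ℝ :=
  !![0, ε * k0, 0, 0; -(ε * k0), 0, 0, ε * k3; 0, 0, 0, 0; 0, -(ε * k3), 0, 0]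

/-- sine-coefficient matrix of the plane-wave field strength -/
noncomputable def Qmκ (ε σ k0 k3 : ℝ) : Matrix (Fin 4) (Fin 4) ℝ :=
  !![0, 0, σ * ε * k0, 0; 0, 0, 0, 0; -(σ * ε * k0), 0, 0, σ * ε * k3;
     0, 0, -(σ * ε * k3), 0]

/-- constant part of the plane-wave field strength -/
noncomputable def Rmκ (lam ε σ k0 : ℝ) : Matrix (Fin 4) (Fin 4) ℝ :=
  !![0, 0, 0, 0; 0, 0, -(lam * σ * ε ^ 2 * k0), 0; 0, lam * σ * ε ^ 2 * k0, 0, 0;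
     0, 0, 0, 0]

/-- closed form of the plane-wave field strength -/
noncomputable def Fmκ (lam ε σ k0 k3 : ℝ) (x : Fin 4 → ℝ) : Matrix (Fin 4) (Fin 4) ℝ :=
  fun a b => Pmκ ε k0 k3 a b * Real.cos (φpw k0 k3 x)
    + Qmκ ε σ k0 k3 a b * Real.sin (φpw k0 k3 x) + Rmκ lam ε σ k0 a b

lemma pd_zero (l : Fin 4) (x : Fin 4 → ℝ) : pd l (fun _ => (0:ℝ)) x = 0 := by
  simp [pd]

lemma Apw_zero (ε σ k0 k3 : ℝ) (x : Fin 4 → ℝ) : Apw ε σ k0 k3 x 0 = 0 := by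
  simp [Apw]

set_option maxHeartbeats 2000000 in
lemma Fpw_eq (lam ε σ k0 k3 : ℝ) : Fpw lam ε σ k0 k3 = Fmκ lam ε σ k0 k3 := by
  funext x a b
  have hsc := Real.sin_sq_add_cos_sq (φpw k0 k3 x)
  fin_cases a <;> fin_cases b <;>
    (simp only [Fpw, Fstr, ρκ, γκ, pb, fκ, Apw_zero, Fin.sum_univ_four]
     simp only [pdApw, pd_zero]
     simp [Apw, Fmκ, Pmκ, Qmκ, Rmκ, Matrix.vecHead, Matrix.vecTail, Real.exp_zero]) <;>
    first
      | ring1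
      | linear_combination (-(lam * σ * ε ^ 2 * k0)) * hsc
      | linear_combination (lam * σ * ε ^ 2 * k0) * hsc

end AuxKM

lemma Fup_Fmκ (lam ε σ k0 k3 : ℝ) (c a : Fin 4) (y : Fin 4 → ℝ) :
    Fup (Fmκ lam ε σ k0 k3) c a y = ηm c c * ηm a a * Fmκ lam ε σ k0 k3 y c a := by
  fin_cases c <;> fin_cases a <;>
    simp [Fup, ηm, Matrix.diagonal, Fin.sum_univ_four]

lemma pdFup (lam ε σ k0 k3 : ℝ) (l c a : Fin 4) (x : Fin 4 → ℝ) :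
    pd l (fun y => Fup (Fmκ lam ε σ k0 k3) c a y) x
      = (ηm c c * ηm a a * Qmκ ε σ k0 k3 c a * Real.cos (φpw k0 k3 x)
          - ηm c c * ηm a a * Pmκ ε k0 k3 c a * Real.sin (φpw k0 k3 x))
        * (if l = 0 then k0 else if l = 3 then -k3 else 0) := by
  have h : (fun y => Fup (Fmκ lam ε σ k0 k3) c a y)
      = fun y => (ηm c c * ηm a a * Pmκ ε k0 k3 c a) * Real.cos (φpw k0 k3 y)
          + (ηm c c * ηm a a * Qmκ ε σ k0 k3 c a) * Real.sin (φpw k0 k3 y)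
          + ηm c c * ηm a a * Rmκ lam ε σ k0 c a := by
    funext y
    rw [Fup_Fmκ]
    simp only [Fmκ]
    ring
  rw [h, pd_trig]

set_option maxHeartbeats 4000000 in
theorem stmt5 (lam ε k0 k3 α σ : ℝ) (hσ : σ = 1 ∨ σ = -1) :
    ∀ x : Fin 4 → ℝ,
      EGpw α lam ε σ k0 k3 0 x
          = -lam * ((2 * lam ^ 2 * (1 + 3 * α) * ε ^ 2 + 6 * α - 1) * k0 ^ 2
              + (6 * α + 2) * k3 ^ 2) * ε ^ 2
      ∧ EGpw α lam ε σ k0 k3 1 x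
          = Apw ε σ k0 k3 x 1 * ((1 - 2 * lam ^ 2 * (6 * α + 1) * ε ^ 2) * k0 ^ 2 - k3 ^ 2)
      ∧ EGpw α lam ε σ k0 k3 2 x
          = Apw ε σ k0 k3 x 2 * ((1 - 2 * lam ^ 2 * (6 * α + 1) * ε ^ 2) * k0 ^ 2 - k3 ^ 2)
      ∧ EGpw α lam ε σ k0 k3 3 x = -(12 * α + 1) * lam * ε ^ 2 * k0 * k3 := by
  intro x
  have hsc := Real.sin_sq_add_cos_sq (φpw k0 k3 x)
  have hs2 : σ ^ 2 = 1 := by rcases hσ with rfl | rfl <;> norm_num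
  refine ⟨?_, ?_, ?_, ?_⟩
  · simp only [EGpw, EC, Fpw_eq, Dcov, pb, Fin.sum_univ_four]
    simp only [pdApw, pdFup, pd_zero]
    simp [fκ, ρκ, γκ, Apw, Fup, Fmκ, Pmκ, Qmκ, Rmκ, ηm, Matrix.diagonal,
      Matrix.vecHead, Matrix.vecTail, Real.exp_zero, Fin.sum_univ_four]
    linear_combination ((-2) * (lam) * (ε)^2 * (k3)^2 + (-6) * (lam) * (ε)^2 * (k3)^2 * (α) + (1) * (lam) * (ε)^2 * (k0)^2 + (-6) * (lam) * (ε)^2 * (k0)^2 * (α)) * hsc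
      + ((-2) * (lam) * (ε)^2 * (k3)^2 * (Real.sin (φpw k0 k3 x))^2 + (-6) * (lam) * (ε)^2 * (k3)^2 * (α) * (Real.sin (φpw k0 k3 x))^2 + (1) * (lam) * (ε)^2 * (k0)^2 * (Real.cos (φpw k0 k3 x))^2 + (-6) * (lam) * (ε)^2 * (k0)^2 * (α) * (Real.sin (φpw k0 k3 x))^2 + (-2) * (lam)^3 * (ε)^4 * (k0)^2 + (-6) * (lam)^3 * (ε)^4 * (k0)^2 * (α)) * hs2
  · simp only [EGpw, EC, Fpw_eq, Dcov, pb, Fin.sum_univ_four]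
    simp only [pdApw, pdFup, pd_zero]
    simp [fκ, ρκ, γκ, Apw, Fup, Fmκ, Pmκ, Qmκ, Rmκ, ηm, Matrix.diagonal,
      Matrix.vecHead, Matrix.vecTail, Real.exp_zero, Fin.sum_univ_four]
    linear_combination ((-2) * (lam)^2 * (ε)^3 * (k0)^2 * (Real.sin (φpw k0 k3 x)) + (-12) * (lam)^2 * (ε)^3 * (k0)^2 * (α) * (Real.sin (φpw k0 k3 x))) * hs2
  · simp only [EGpw, EC, Fpw_eq, Dcov, pb, Fin.sum_univ_four]
    simp only [pdApw, pdFup, pd_zero]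
    simp [fκ, ρκ, γκ, Apw, Fup, Fmκ, Pmκ, Qmκ, Rmκ, ηm, Matrix.diagonal,
      Matrix.vecHead, Matrix.vecTail, Real.exp_zero, Fin.sum_univ_four]
    ring
  · simp only [EGpw, EC, Fpw_eq, Dcov, pb, Fin.sum_univ_four]
    simp only [pdApw, pdFup, pd_zero]
    simp [fκ, ρκ, γκ, Apw, Fup, Fmκ, Pmκ, Qmκ, Rmκ, ηm, Matrix.diagonal,
      Matrix.vecHead, Matrix.vecTail, Real.exp_zero, Fin.sum_univ_four]
    linear_combination ((-1) * (lam) * (ε)^2 * (k0) * (k3) + (-12) * (lam) * (ε)^2 * (k0) * (k3) * (α)) * hsc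
      + ((1) * (lam) * (ε)^2 * (k0) * (k3) * (Real.cos (φpw k0 k3 x))^2 + (-2) * (lam) * (ε)^2 * (k0) * (k3) * (Real.sin (φpw k0 k3 x))^2 + (-12) * (lam) * (ε)^2 * (k0) * (k3) * (α) * (Real.sin (φpw k0 k3 x))^2) * hs2
end
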